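/- (Lemma 2, second part.) Let {G_k}_{k≥0} be a B-strongly connected sequence of directed graphs on n nodes, each containing all self-loops, with associated column-stochastic weight matrices {A_k}, and define δ = inf_{k≥0} min_{1≤i≤n} [A_{k:0} 𝟏_n]_i. Then there exists a sequence {φ_k}_{k≥0} of stochastic vectors in ℝ^n satisfying both |[A_{k:t}]_{ij} − φ_k^i| ≤ 4 (1 − 1/n^{nB})^{(k−t)/B} for all k ≥ t ≥ 0 and all i, j, and φ_k^j ≥ δ/n for all k ≥ 0 and all j ∈ {1,…,n}. -/

import Mathlib

/-!
Take `φ_k = A_{k:0} (𝟏 / n)`: it is stochastic, and `φ_k ≥ δ / n` is immediate. Since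
`A_{k:0} = A_{k:t} A_{t-1:0}`, the entry `φ_k^i` is an average of row `i` of `A_{k:t}` against the
stochastic vector `A_{t-1:0} 𝟏 / n`, so `|[A_{k:t}]_{ij} - φ_k^i|` is at most the spread
(max minus min) of that row.

Self-loops and `B`-strong connectivity make every product over `n` consecutive aligned blocks of
`B` steps entrywise at least `n ^ (-n B)`: in each block some edge leaves the set of nodes already
reached. Right multiplication by a column-stochastic matrix with entries `≥ ε` shrinks the spread
of a row by the factor `1 - n ε`, which for `ε = n ^ (-n B)` is at most `(1 - n ^ (-n B)) ^ n`.
Counting the complete windows inside `[t, k]` gives the rate.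
-/

open Finset Matrix

/-- Number of out-neighbors of `j` other than itself, in the digraph with edge set `E`. -/
def outDeg {n : ℕ} (E : Finset (Fin n × Fin n)) (j : Fin n) : ℕ :=
  (Finset.univ.filter fun i => (j, i) ∈ E ∧ i ≠ j).card

/-- Number of in-neighbors of `j` other than itself, in the digraph with edge set `E`. -/
def inDeg {n : ℕ} (E : Finset (Fin n × Fin n)) (j : Fin n) : ℕ :=
  (Finset.univ.filter fun i => (i, j) ∈ E ∧ i ≠ j).card

/-- The column-stochastic weight matrix associated with the edge set `E`:
`A i j = 1/(d_j + 1)` if `(j,i) ∈ E` and `0` otherwise. -/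
noncomputable def weightMatrix {n : ℕ} (E : Finset (Fin n × Fin n)) :
    Matrix (Fin n) (Fin n) ℝ :=
  Matrix.of fun i j => if (j, i) ∈ E then 1 / (outDeg E j + 1) else 0

/-- `prodA A t m = A (t+m) * A (t+m-1) * ⋯ * A t`, i.e. the backward product `A_{(t+m):t}`. -/
noncomputable def prodA {n : ℕ} (A : ℕ → Matrix (Fin n) (Fin n) ℝ) (t : ℕ) :
    ℕ → Matrix (Fin n) (Fin n) ℝ
  | 0 => A t
  | m + 1 => A (t + m + 1) * prodA A t m

/-- The digraph on `Fin n` with edge set `E` is strongly connected. -/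
def StronglyConnected {n : ℕ} (E : Finset (Fin n × Fin n)) : Prop :=
  ∀ i j : Fin n, Relation.ReflTransGen (fun a b => (a, b) ∈ E) i j

/-- The graph sequence `E` is `B`-strongly connected. -/
def BStronglyConnected {n : ℕ} (E : ℕ → Finset (Fin n × Fin n)) (B : ℕ) : Prop :=
  ∀ k : ℕ, StronglyConnected ((Finset.Ico (k * B) ((k + 1) * B)).biUnion E)

section SegProd

variable {ι R : Type*} [Fintype ι] [DecidableEq ι] [Semiring R]

/-- `segProd A s m = A (s + m - 1) * ⋯ * A s`, the product of `m` factors starting at time `s`;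
thus `prodA A t m = segProd A t (m + 1)`. -/
noncomputable def segProd (A : ℕ → Matrix ι ι R) (s : ℕ) : ℕ → Matrix ι ι R
  | 0 => 1
  | m + 1 => A (s + m) * segProd A s m

theorem segProd_add (A : ℕ → Matrix ι ι R) (s a b : ℕ) :
    segProd A s (a + b) = segProd A (s + a) b * segProd A s a := by
  induction b with
  | zero => simp [segProd]
  | succ b ih => rw [← add_assoc, segProd, ih, segProd, mul_assoc, add_assoc]

theorem segProd_mem {S : Submonoid (Matrix ι ι R)} {A : ℕ → Matrix ι ι R}
    (hA : ∀ k, A k ∈ S) (s m : ℕ) : segProd A s m ∈ S := by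
  induction m with
  | zero => exact S.one_mem
  | succ m ih => exact S.mul_mem (hA _) ih

end SegProd

theorem prodA_eq_segProd {n : ℕ} (A : ℕ → Matrix (Fin n) (Fin n) ℝ) (t m : ℕ) :
    prodA A t m = segProd A t (m + 1) := by
  induction m with
  | zero => simp [prodA, segProd]
  | succ m ih => rw [prodA, ih]; rfl

section Spread

variable {ι : Type*}

def SpreadLE (v : ι → ℝ) (d : ℝ) : Prop :=
  ∃ c, ∀ j, v j ∈ Set.Icc c (c + d)

theorem spreadLE_zero_of_subsingleton [Subsingleton ι] (v : ι → ℝ) : SpreadLE v 0 := by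
  obtain hι | ⟨⟨j₀⟩⟩ := isEmpty_or_nonempty ι
  · exact ⟨0, fun j => isEmptyElim j⟩
  · exact ⟨v j₀, fun j => by simp [Subsingleton.elim j j₀]⟩

theorem SpreadLE.abs_sub_dotProduct_le [Fintype ι] {v : ι → ℝ} {d : ℝ} (hv : SpreadLE v d)
    {w : ι → ℝ} (hw : w ∈ stdSimplex ℝ ι) (j : ι) : |v j - v ⬝ᵥ w| ≤ d := by
  obtain ⟨c, hc⟩ := hv
  have hlo : c ≤ v ⬝ᵥ w :=
    calc c = ∑ l, c * w l := by rw [← Finset.mul_sum, hw.2, mul_one]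
      _ ≤ v ⬝ᵥ w := Finset.sum_le_sum fun l _ => mul_le_mul_of_nonneg_right (hc l).1 (hw.1 l)
  have hhi : v ⬝ᵥ w ≤ c + d :=
    calc v ⬝ᵥ w ≤ ∑ l, (c + d) * w l :=
          Finset.sum_le_sum fun l _ => mul_le_mul_of_nonneg_right (hc l).2 (hw.1 l)
      _ = c + d := by rw [← Finset.mul_sum, hw.2, mul_one]
  rw [abs_le]
  constructor <;> linarith [(hc j).1, (hc j).2]

variable [Fintype ι] [DecidableEq ι]

theorem spreadLE_one_of_mem_colStochastic {M : Matrix ι ι ℝ} (hM : M ∈ colStochastic ℝ ι)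
    (i : ι) : SpreadLE (M i) 1 :=
  ⟨0, fun _ =>
    ⟨nonneg_of_mem_colStochastic hM, by simpa using le_one_of_mem_colStochastic hM⟩⟩

/-- Writing `(v ᵥ* Q) j = ε ∑ v + ∑ₗ (Q l j - ε) v l`, the second sum has nonnegative
weights of total mass `1 - card ι * ε`. -/
theorem SpreadLE.vecMul {v : ι → ℝ} {d ε : ℝ} {Q : Matrix ι ι ℝ} (hv : SpreadLE v d)
    (hQ : Q ∈ colStochastic ℝ ι) (hε : ∀ l j, ε ≤ Q l j) :
    SpreadLE (v ᵥ* Q) ((1 - Fintype.card ι * ε) * d) := by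
  obtain ⟨c, hc⟩ := hv
  refine ⟨ε * ∑ l, v l + (1 - Fintype.card ι * ε) * c, fun j => ?_⟩
  have hmass : ∑ l, (Q l j - ε) = 1 - Fintype.card ι * ε := by
    simp [Finset.sum_sub_distrib, sum_col_of_mem_colStochastic hQ]
  have hsplit : (v ᵥ* Q) j = ε * ∑ l, v l + ∑ l, (Q l j - ε) * v l := by
    simp only [Matrix.vecMul, dotProduct, Finset.mul_sum, ← Finset.sum_add_distrib]
    exact Finset.sum_congr rfl fun l _ => by ring
  have hlo : ∑ l, (Q l j - ε) * c ≤ ∑ l, (Q l j - ε) * v l :=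
    Finset.sum_le_sum fun l _ => mul_le_mul_of_nonneg_left (hc l).1 (sub_nonneg.2 (hε l j))
  have hhi : ∑ l, (Q l j - ε) * v l ≤ ∑ l, (Q l j - ε) * (c + d) :=
    Finset.sum_le_sum fun l _ => mul_le_mul_of_nonneg_left (hc l).2 (sub_nonneg.2 (hε l j))
  rw [← Finset.sum_mul, hmass] at hlo hhi
  constructor <;> nlinarith

theorem SpreadLE.vecMul_of_mem_colStochastic {v : ι → ℝ} {d : ℝ} {Q : Matrix ι ι ℝ}
    (hv : SpreadLE v d) (hQ : Q ∈ colStochastic ℝ ι) : SpreadLE (v ᵥ* Q) d := by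
  simpa using hv.vecMul hQ fun l j => nonneg_of_mem_colStochastic hQ

theorem mulVec_mem_stdSimplex {M : Matrix ι ι ℝ} (hM : M ∈ colStochastic ℝ ι)
    {w : ι → ℝ} (hw : w ∈ stdSimplex ℝ ι) : M *ᵥ w ∈ stdSimplex ℝ ι :=
  ⟨nonneg_mulVec_of_mem_colStochastic hM hw.1, by rw [sum_mulVec_of_mem_colStochastic hM, hw.2]⟩

end Spread

section WeightMatrix

variable {n : ℕ} (E : Finset (Fin n × Fin n))

theorem outDeg_lt (j : Fin n) : outDeg E j < n :=
  (Finset.card_lt_univ_of_notMem (x := j) (by simp)).trans_eq (Fintype.card_fin n)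

theorem card_filter_mem_eq_outDeg_add_one {j : Fin n} (hj : (j, j) ∈ E) :
    (Finset.univ.filter fun i => (j, i) ∈ E).card = outDeg E j + 1 := by
  have : (Finset.univ.filter fun i => (j, i) ∈ E)
      = insert j (Finset.univ.filter fun i => (j, i) ∈ E ∧ i ≠ j) := by
    ext i
    by_cases h : i = j <;> simp [h, hj]
  rw [this, Finset.card_insert_of_notMem (by simp), outDeg]

theorem weightMatrix_mem_colStochastic (hloop : ∀ j, (j, j) ∈ E) :
    weightMatrix E ∈ colStochastic ℝ (Fin n) := by
  refine mem_colStochastic_iff_sum.2 ⟨fun i j => ?_, fun j => ?_⟩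
  · simp only [weightMatrix, Matrix.of_apply]
    split_ifs <;> positivity
  · simp only [weightMatrix, Matrix.of_apply]
    rw [Finset.sum_ite, Finset.sum_const, Finset.sum_const_zero, add_zero,
      card_filter_mem_eq_outDeg_add_one E (hloop j), nsmul_eq_mul]
    push_cast
    field_simp

theorem inv_le_weightMatrix {i j : Fin n} (h : (j, i) ∈ E) :
    (n : ℝ)⁻¹ ≤ weightMatrix E i j := by
  simp only [weightMatrix, Matrix.of_apply, if_pos h, one_div]
  gcongr
  exact_mod_cast outDeg_lt E j

end WeightMatrix

theorem Relation.ReflTransGen.exists_mem_notMem {α : Type*} {r : α → α → Prop} {s : Set α}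
    {x y : α} (h : Relation.ReflTransGen r x y) (hx : x ∈ s) (hy : y ∉ s) :
    ∃ a b, r a b ∧ a ∈ s ∧ b ∉ s := by
  induction h using Relation.ReflTransGen.head_induction_on with
  | refl => exact absurd hx hy
  | @head a b hab _ ih =>
    by_cases hb : b ∈ s
    · exact ih hb
    · exact ⟨a, b, hab, hx, hb⟩

theorem mul_le_mul_apply_of_le {ι : Type*} [Fintype ι] {M N : Matrix ι ι ℝ}
    (hM : ∀ i j, 0 ≤ M i j) (hN : ∀ i j, 0 ≤ N i j) {α β : ℝ} (hβ : 0 ≤ β)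
    {i l j : ι} (hα : α ≤ M i l) (hβ' : β ≤ N l j) : α * β ≤ (M * N) i j :=
  calc α * β ≤ M i l * N l j := mul_le_mul hα hβ' hβ (hM i l)
    _ ≤ (M * N) i j := Finset.single_le_sum (f := fun l => M i l * N l j)
        (fun l _ => mul_nonneg (hM i l) (hN l j)) (Finset.mem_univ l)

structure IsStochasticWeighting {n : ℕ} (E : ℕ → Finset (Fin n × Fin n))
    (A : ℕ → Matrix (Fin n) (Fin n) ℝ) (ε : ℝ) : Prop where
  mem_colStochastic : ∀ k, A k ∈ colStochastic ℝ (Fin n)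
  nonneg : 0 ≤ ε
  le_apply : ∀ k i j, (j, i) ∈ E k → ε ≤ A k i j
  loop : ∀ k i, (i, i) ∈ E k

theorem isStochasticWeighting_weightMatrix {n : ℕ} {E : ℕ → Finset (Fin n × Fin n)}
    (hloop : ∀ k i, (i, i) ∈ E k) :
    IsStochasticWeighting E (fun k => weightMatrix (E k)) (n : ℝ)⁻¹ where
  mem_colStochastic k := weightMatrix_mem_colStochastic (E k) (hloop k)
  nonneg := by positivity
  le_apply k _ _ h := inv_le_weightMatrix (E k) h
  loop := hloop

noncomputable def reached {n : ℕ} (A : ℕ → Matrix (Fin n) (Fin n) ℝ) (ε : ℝ) (s m : ℕ)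
    (j : Fin n) : Finset (Fin n) :=
  Finset.univ.filter fun i => ε ^ m ≤ segProd A s m i j

namespace IsStochasticWeighting

variable {n B : ℕ} {E : ℕ → Finset (Fin n × Fin n)} {A : ℕ → Matrix (Fin n) (Fin n) ℝ}
  {ε : ℝ}

theorem segProd_nonneg (h : IsStochasticWeighting E A ε) (s m : ℕ) (i j : Fin n) :
    0 ≤ segProd A s m i j :=
  nonneg_of_mem_colStochastic (segProd_mem h.mem_colStochastic s m)

theorem pow_le_segProd_apply_self (h : IsStochasticWeighting E A ε) (s m : ℕ) (i : Fin n) :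
    ε ^ m ≤ segProd A s m i i := by
  induction m with
  | zero => simp [segProd]
  | succ m ih =>
    rw [pow_succ', segProd]
    exact mul_le_mul_apply_of_le (fun _ _ => nonneg_of_mem_colStochastic (h.mem_colStochastic _))
      (h.segProd_nonneg s m) (pow_nonneg h.nonneg m) (h.le_apply _ i i (h.loop _ i)) ih

theorem pow_le_segProd_apply_of_mem (h : IsStochasticWeighting E A ε) {u s m : ℕ}
    (hus : u ≤ s) (hsm : s < u + m) {a b : Fin n} (hab : (a, b) ∈ E s) :
    ε ^ m ≤ segProd A u m b a := by
  induction m with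
  | zero => omega
  | succ m ih =>
    rw [pow_succ', segProd]
    have hA i j : 0 ≤ A (u + m) i j := nonneg_of_mem_colStochastic (h.mem_colStochastic _)
    rcases Nat.lt_succ_iff_lt_or_eq.1 (show s < u + m + 1 by omega) with hlt | rfl
    · exact mul_le_mul_apply_of_le hA (h.segProd_nonneg u m) (pow_nonneg h.nonneg m)
        (h.le_apply _ b b (h.loop _ b)) (ih hlt)
    · exact mul_le_mul_apply_of_le hA (h.segProd_nonneg u m) (pow_nonneg h.nonneg m)
        (h.le_apply _ b a hab) (h.pow_le_segProd_apply_self u m a)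

theorem self_mem_reached (h : IsStochasticWeighting E A ε) (s m : ℕ) (j : Fin n) :
    j ∈ reached A ε s m j := by
  simpa [reached] using h.pow_le_segProd_apply_self s m j

theorem mem_reached_add (h : IsStochasticWeighting E A ε) {s m m' : ℕ} {a b j : Fin n}
    (ha : a ∈ reached A ε s m j) (hba : ε ^ m' ≤ segProd A (s + m) m' b a) :
    b ∈ reached A ε s (m + m') j := by
  simp only [reached, Finset.mem_filter, Finset.mem_univ, true_and] at ha ⊢
  rw [segProd_add, pow_add, mul_comm]
  exact mul_le_mul_apply_of_le (h.segProd_nonneg _ _) (h.segProd_nonneg _ _)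
    (pow_nonneg h.nonneg _) hba ha

theorem reached_subset_add (h : IsStochasticWeighting E A ε) (s m m' : ℕ) (j : Fin n) :
    reached A ε s m j ⊆ reached A ε s (m + m') j :=
  fun i hi => h.mem_reached_add hi (h.pow_le_segProd_apply_self _ _ i)

/-- Each block `[(w + m) B, (w + m + 1) B)` has an edge leaving the set reached so far. -/
theorem card_reached_ge (h : IsStochasticWeighting E A ε) (hconn : BStronglyConnected E B)
    (w : ℕ) (j : Fin n) (m : ℕ) : min (m + 1) n ≤ (reached A ε (w * B) (m * B) j).card := by
  induction m with
  | zero => exact (Nat.min_le_left 1 n).trans (Finset.card_pos.2 ⟨j, h.self_mem_reached _ _ j⟩)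
  | succ m ih =>
    set S := reached A ε (w * B) (m * B) j
    have hST := h.reached_subset_add (w * B) (m * B) B j
    rw [add_mul, one_mul]
    by_cases hfull : ∀ i, i ∈ S
    · rw [Finset.eq_univ_of_forall fun i => hST (hfull i)]
      simp
    obtain ⟨c, hc⟩ := not_forall.1 hfull
    obtain ⟨a, b, hab, haS, hbS⟩ :=
      (hconn (w + m) j c).exists_mem_notMem (s := ↑S) (h.self_mem_reached _ _ j) hc
    obtain ⟨s, hs, habs⟩ := Finset.mem_biUnion.1 hab
    have hs := Finset.mem_Ico.1 hs
    have hstart : (w + m) * B = w * B + m * B := by ring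
    have hend : (w + m + 1) * B = w * B + m * B + B := by ring
    have hbT := h.mem_reached_add haS
      (h.pow_le_segProd_apply_of_mem (m := B) (by omega) (by omega) habs)
    calc min (m + 1 + 1) n ≤ S.card + 1 := by omega
      _ = (insert b S).card := (Finset.card_insert_of_notMem hbS).symm
      _ ≤ _ := Finset.card_le_card (Finset.insert_subset hbT hST)

theorem pow_le_segProd_window (h : IsStochasticWeighting E A ε) (hconn : BStronglyConnected E B)
    (w : ℕ) (i j : Fin n) : ε ^ (n * B) ≤ segProd A (w * B) (n * B) i j := by
  have hcard := h.card_reached_ge hconn w j n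
  rw [min_eq_right (Nat.le_succ n)] at hcard
  have huniv := Finset.eq_univ_of_card _
    (le_antisymm (Finset.card_le_univ _) ((Fintype.card_fin n).trans_le hcard))
  exact (Finset.mem_filter.1 (Finset.eq_univ_iff_forall.1 huniv i)).2

theorem spreadLE_vecMul_segProd_windows (h : IsStochasticWeighting E A ε)
    (hconn : BStronglyConnected E B) {v : Fin n → ℝ} {d : ℝ} (hv : SpreadLE v d) (M : ℕ) :
    ∀ w, SpreadLE (v ᵥ* segProd A (w * B) (M * (n * B))) ((1 - n * ε ^ (n * B)) ^ M * d) := by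
  induction M with
  | zero => intro w; simpa [segProd] using hv
  | succ M ih =>
    intro w
    have hsplit : segProd A (w * B) ((M + 1) * (n * B))
        = segProd A ((w + n) * B) (M * (n * B)) * segProd A (w * B) (n * B) := by
      rw [show (M + 1) * (n * B) = n * B + M * (n * B) by ring, segProd_add,
        show w * B + n * B = (w + n) * B by ring]
    rw [hsplit, ← vecMul_vecMul]
    convert (ih (w + n)).vecMul (segProd_mem h.mem_colStochastic _ _)
      (h.pow_le_segProd_window hconn w) using 1
    rw [Fintype.card_fin, pow_succ]
    ring

/-- At most `B - 1` factors precede the first multiple of `B` after `t`, so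
`(L + 1 - B) / (n B)` complete windows of `n` aligned blocks fit into the `L` factors. -/
theorem spreadLE_segProd_row (h : IsStochasticWeighting E A ε) (hconn : BStronglyConnected E B)
    (t L : ℕ) (i : Fin n) :
    SpreadLE (segProd A t L i) ((1 - n * ε ^ (n * B)) ^ ((L + 1 - B) / (n * B))) := by
  set M := (L + 1 - B) / (n * B)
  rcases Nat.eq_zero_or_pos M with hM | hM
  · simpa [hM] using spreadLE_one_of_mem_colStochastic (segProd_mem h.mem_colStochastic t L) i
  set w := (t + B - 1) / B
  have hnB : 0 < n * B := Nat.pos_of_ne_zero fun h0 => by simp [M, h0] at hM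
  have hw₁ : w * B ≤ t + B - 1 := Nat.div_mul_le_self _ _
  have hw₂ : t + B - 1 < B * (w + 1) := Nat.lt_mul_div_succ _ (Nat.pos_of_mul_pos_left hnB)
  have hw₃ : B * (w + 1) = w * B + B := by ring
  have hM₁ : M * (n * B) ≤ L + 1 - B := Nat.div_mul_le_self _ _
  have hM₂ : n * B ≤ M * (n * B) := Nat.le_mul_of_pos_left _ hM
  set r := L - (w * B - t) - M * (n * B)
  have hsplit : segProd A t L = segProd A (w * B + M * (n * B)) r
      * segProd A (w * B) (M * (n * B)) * segProd A t (w * B - t) := by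
    rw [show L = (w * B - t) + (M * (n * B) + r) by omega, segProd_add,
      show t + (w * B - t) = w * B by omega, segProd_add]
  rw [hsplit, mul_apply_eq_vecMul, mul_apply_eq_vecMul]
  have htail := spreadLE_one_of_mem_colStochastic
    (segProd_mem h.mem_colStochastic (w * B + M * (n * B)) r) i
  simpa using (h.spreadLE_vecMul_segProd_windows hconn htail M w).vecMul_of_mem_colStochastic
    (segProd_mem h.mem_colStochastic t (w * B - t))

end IsStochasticWeighting

theorem one_sub_mul_le_one_sub_pow {x : ℝ} (hx : x ≤ 2) (m : ℕ) :
    1 - m * x ≤ (1 - x) ^ m := by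
  simpa [sub_eq_add_neg] using one_add_mul_le_pow (a := -x) (by linarith) m

theorem pow_mul_pow_le_rpow {l x : ℝ} (h0 : 0 < l) (h1 : l ≤ 1) {p q : ℕ} (hx : x ≤ p + q) :
    l ^ p * l ^ q ≤ l ^ x := by
  rw [← pow_add, ← Real.rpow_natCast]
  exact Real.rpow_le_rpow_of_exponent_ge h0 h1 (by push_cast; exact hx)

/-- Bernoulli gives both `1 - n e ≤ (1 - e) ^ n` and `1 / 4 ≤ (1 - e) ^ (n + 1)` for
`e = 1 / n ^ (n B)`; the latter absorbs the at most `n + 1` blocks of length `B` not covered by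
complete windows. -/
theorem pow_le_four_mul_rpow {n B M : ℕ} (hn : 2 ≤ n) (hB : 1 ≤ B) {x : ℝ}
    (hx : x ≤ n * M + (n + 1)) :
    (1 - n * ((n : ℝ)⁻¹) ^ (n * B)) ^ M ≤ 4 * (1 - 1 / (n : ℝ) ^ (n * B)) ^ x := by
  set e : ℝ := 1 / (n : ℝ) ^ (n * B)
  have hn' : (2 : ℝ) ≤ n := by exact_mod_cast hn
  have he0 : 0 ≤ e := by positivity
  have he : e ≤ 1 / (n : ℝ) ^ 2 :=
    one_div_le_one_div_of_le (by positivity)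
      (pow_le_pow_right₀ (by linarith) (hn.trans (Nat.le_mul_of_pos_right n hB)))
  have hne : (n + 1) * e ≤ 3 / 4 := by
    calc (n + 1) * e ≤ (n + 1) * (1 / (n : ℝ) ^ 2) := by gcongr
      _ ≤ 3 / 4 := by rw [mul_one_div, div_le_div_iff₀ (by positivity) (by norm_num)]; nlinarith
  have hl0 : 0 < 1 - e := by nlinarith
  have hwindow := one_sub_mul_le_one_sub_pow (x := e) (by linarith) n
  have hgap : 1 / 4 ≤ (1 - e) ^ (n + 1) := by
    have := one_sub_mul_le_one_sub_pow (x := e) (by linarith) (n + 1)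
    push_cast at this
    linarith
  rw [show ((n : ℝ)⁻¹) ^ (n * B) = e by simp [e, inv_pow]]
  calc (1 - n * e) ^ M ≤ ((1 - e) ^ n) ^ M := pow_le_pow_left₀ (by nlinarith) hwindow M
    _ = 4 * ((1 - e) ^ (n * M) * (1 / 4)) := by rw [pow_mul]; ring
    _ ≤ 4 * ((1 - e) ^ (n * M) * (1 - e) ^ (n + 1)) := by gcongr
    _ ≤ 4 * (1 - e) ^ x :=
        mul_le_mul_of_nonneg_left (pow_mul_pow_le_rpow hl0 (by linarith) (by push_cast; linarith))
          (by norm_num)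

theorem sub_div_le_mul_div_add {n B t k : ℕ} (hn : 1 ≤ n) (hB : 1 ≤ B) (htk : t ≤ k) :
    ((k : ℝ) - t) / B ≤ n * ((k - t + 1 + 1 - B) / (n * B) : ℕ) + (n + 1) := by
  set M := (k - t + 1 + 1 - B) / (n * B)
  have hM : k - t + 1 + 1 - B < n * B * (M + 1) := Nat.lt_mul_div_succ _ (by positivity)
  have hnat : k - t < B * (n * M + n + 1) := by
    have : n * B * (M + 1) + B = B * (n * M + n + 1) := by ring
    omega
  rw [div_le_iff₀ (by positivity), ← Nat.cast_sub htk]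
  exact_mod_cast (by nlinarith : (k - t) ≤ (n * M + (n + 1)) * B)

theorem iInf_iInf_le_of_nonneg {ι κ : Type*} [Finite κ] {f : ι → κ → ℝ}
    (hf : ∀ i j, 0 ≤ f i j) (i : ι) (j : κ) : ⨅ i, ⨅ j, f i j ≤ f i j :=
  (ciInf_le ⟨0, Set.forall_mem_range.2 fun i => Real.iInf_nonneg (hf i)⟩ i).trans
    (ciInf_le (Set.finite_range _).bddBelow j)

theorem limit_vectors_lower_bound
    (n B : ℕ) (hn : 1 ≤ n) (hB : 1 ≤ B)
    (E : ℕ → Finset (Fin n × Fin n)) (hloop : ∀ k i, (i, i) ∈ E k)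
    (hconn : BStronglyConnected E B)
    (A : ℕ → Matrix (Fin n) (Fin n) ℝ) (hA : ∀ k, A k = weightMatrix (E k))
    (δ : ℝ) (hδ : δ = ⨅ k : ℕ, ⨅ i : Fin n, (prodA A 0 k *ᵥ fun _ => (1 : ℝ)) i) :
    ∃ φ : ℕ → Fin n → ℝ,
      (∀ k, (∀ i, 0 ≤ φ k i) ∧ ∑ i, φ k i = 1) ∧
      (∀ t k, t ≤ k → ∀ i j,
        |prodA A t (k - t) i j - φ k i|
          ≤ 4 * (1 - 1 / (n : ℝ) ^ (n * B)) ^ (((k : ℝ) - (t : ℝ)) / (B : ℝ))) ∧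
      (∀ k, ∀ j : Fin n, φ k j ≥ δ / n) := by
  have hW : IsStochasticWeighting E A (n : ℝ)⁻¹ :=
    funext hA ▸ isStochasticWeighting_weightMatrix hloop
  have hprod k := segProd_mem hW.mem_colStochastic 0 k
  set u : Fin n → ℝ := fun _ => (n : ℝ)⁻¹
  have hu : u ∈ stdSimplex ℝ (Fin n) :=
    ⟨fun _ => by positivity, by simp [u, mul_inv_cancel₀ (by positivity : (n : ℝ) ≠ 0)]⟩
  refine ⟨fun k => segProd A 0 (k + 1) *ᵥ u, fun k => mulVec_mem_stdSimplex (hprod _) hu,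
    fun t k htk i j => ?_, fun k j => ?_⟩
  · have hsplit : segProd A 0 (k + 1) = segProd A t (k - t + 1) * segProd A 0 t := by
      rw [show k + 1 = t + (k - t + 1) by omega, segProd_add, zero_add]
    dsimp only
    rw [prodA_eq_segProd, hsplit, ← mulVec_mulVec]
    have hc := mulVec_mem_stdSimplex (hprod t) hu
    rcases Nat.lt_or_ge n 2 with hn1 | hn2
    · obtain rfl : n = 1 := by omega
      refine ((spreadLE_zero_of_subsingleton _).abs_sub_dotProduct_le hc j).trans ?_
      simp [Real.rpow_nonneg]
    · exact ((hW.spreadLE_segProd_row hconn t (k - t + 1) i).abs_sub_dotProduct_le hc j).trans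
        (pow_le_four_mul_rpow hn2 hB (sub_div_le_mul_div_add hn hB htk))
  · have hφ : segProd A 0 (k + 1) *ᵥ u
        = (n : ℝ)⁻¹ • (prodA A 0 k *ᵥ fun _ => (1 : ℝ)) := by
      rw [prodA_eq_segProd, ← mulVec_smul]
      congr 1
      ext
      simp [u]
    dsimp only
    rw [hφ, ge_iff_le, div_eq_inv_mul, hδ]
    exact mul_le_mul_of_nonneg_left (iInf_iInf_le_of_nonneg (fun k i =>
      nonneg_mulVec_of_mem_colStochastic (prodA_eq_segProd A 0 k ▸ hprod (k + 1))
        (fun _ => zero_le_one) i) k j) (by positivity)
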